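/- The matrix whose columns are M_1^{i_1} ⋯ M_m^{i_m} 𝟙, ordered by the pure lexicographic order on (i_1,…,i_m) ∈ {0,1}^m, equals the Kronecker product of the m matrices [[1,1],[1,γ_k^{-1}]], and hence has determinant ∏_{k=1}^m (γ_k^{-1}-1)^{2^{m-1}}. -/

import Mathlib

/-!
Every `M_k` is diagonal, so the `(J, I)` entry of `Bmat` is `∏ k, (γ_k⁻¹ ^ j_k) ^ i_k`, which
is the product of the `(j_k, i_k)` entries of `[[1,1],[1,γ_k⁻¹]]`. The determinant of an `m`-fold
Kronecker product of `n × n` matrices is `∏ k, det (A k) ^ n ^ (m - 1)`: splitting off the first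
factor, `det (A ⊗ B) = det A ^ card * det B ^ card` closes an induction on `m`.
-/

open Matrix

/-- The matrix whose `I`-th column is `M_1^{i_1} ⋯ M_m^{i_m} 𝟙`, where `M_k` is the
diagonal matrix with `(J,J)`-entry `γ_k^{-j_k}` and `𝟙` is the all-ones vector. -/
noncomputable def Bmat {K : Type*} [Field K] (m : ℕ) (γ : Fin m → K) :
    Matrix (Fin m → Fin 2) (Fin m → Fin 2) K :=
  Matrix.of fun J I =>
    ((List.ofFn fun k =>
        (Matrix.diagonal fun J' : Fin m → Fin 2 => ((γ k)⁻¹) ^ (J' k : ℕ)) ^ (I k : ℕ)).prod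
      *ᵥ fun _ => (1 : K)) J

namespace Matrix

variable {n R : Type*} [CommRing R]

def piKronecker {m : ℕ} (A : Fin m → Matrix n n R) : Matrix (Fin m → n) (Fin m → n) R :=
  of fun J I => ∏ k, A k (J k) (I k)

theorem piKronecker_succ {m : ℕ} (A : Fin (m + 1) → Matrix n n R) :
    piKronecker A = (kroneckerMap (· * ·) (A 0) (piKronecker fun k => A k.succ)).submatrix
      (Fin.consEquiv fun _ => n).symm (Fin.consEquiv fun _ => n).symm := by
  ext J I
  simp [piKronecker, Fin.prod_univ_succ, Fin.consEquiv, Fin.tail]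

variable [Fintype n] [DecidableEq n]

theorem det_piKronecker {m : ℕ} (A : Fin m → Matrix n n R) :
    (piKronecker A).det = ∏ k, (A k).det ^ Fintype.card n ^ (m - 1) := by
  induction m with
  | zero => simp [piKronecker]
  | succ m ih =>
    rw [piKronecker_succ, det_submatrix_equiv_self, det_kronecker, ih, Fin.prod_univ_succ,
      Fintype.card_fun, Fintype.card_fin]
    rcases m with _ | m
    · simp
    · simp only [← Finset.prod_pow, ← pow_mul, ← pow_succ, Nat.add_sub_cancel]

theorem list_prod_map_diagonal (l : List (n → R)) :
    (l.map diagonal).prod = diagonal l.prod :=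
  (map_list_prod (diagonalRingHom n R) l).symm

theorem ofFn_prod_diagonal_mulVec_one {m : ℕ} (d : Fin m → n → R) (J : n) :
    ((List.ofFn fun k => diagonal (d k)).prod *ᵥ fun _ => (1 : R)) J = ∏ k, d k J := by
  rw [← Function.comp_def diagonal d, ← List.map_ofFn, list_prod_map_diagonal, mulVec_diagonal,
    mul_one, List.prod_ofFn, Finset.prod_apply]

end Matrix

theorem pow_pow_val_eq_of_fin_two {K : Type*} [Monoid K] (x : K) (a b : Fin 2) :
    (x ^ (a : ℕ)) ^ (b : ℕ) = !![1, 1; 1, x] a b := by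
  fin_cases a <;> fin_cases b <;> simp

theorem Bmat_eq_piKronecker {K : Type*} [Field K] (m : ℕ) (γ : Fin m → K) :
    Bmat m γ = piKronecker fun k => !![1, 1; 1, (γ k)⁻¹] := by
  ext J I
  simp only [Bmat, piKronecker, of_apply, diagonal_pow, ofFn_prod_diagonal_mulVec_one,
    Pi.pow_apply, pow_pow_val_eq_of_fin_two]

theorem Bmat_eq_kron_general {K : Type*} [Field K] (m : ℕ) (γ : Fin m → K) :
    Bmat m γ = (Matrix.of fun J I : Fin m → Fin 2 =>
        ∏ k, (!![1, 1; 1, (γ k)⁻¹] : Matrix (Fin 2) (Fin 2) K) (J k) (I k)) ∧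
      (Bmat m γ).det = ∏ k, ((γ k)⁻¹ - 1) ^ 2 ^ (m - 1) := by
  refine ⟨Bmat_eq_piKronecker m γ, ?_⟩
  rw [Bmat_eq_piKronecker, det_piKronecker, Fintype.card_fin]
  simp only [det_fin_two_of, one_mul, mul_one]

/-- The matrix with columns `M_1^{i_1} ⋯ M_m^{i_m} 𝟙` equals the Kronecker product of
the matrices `[[1,1],[1,γ_k⁻¹]]` (realized entrywise on the index type `Fin m → Fin 2`),
and hence its determinant is `∏ k, (γ_k⁻¹-1)^(2^(m-1))`. -/
theorem Bmat_eq_kron {K : Type*} [Field K] (m : ℕ) (γ : Fin m → K)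
    (h0 : ∀ k, γ k ≠ 0) :
    Bmat m γ = (Matrix.of fun J I : Fin m → Fin 2 =>
        ∏ k, (!![1, 1; 1, (γ k)⁻¹] : Matrix (Fin 2) (Fin 2) K) (J k) (I k)) ∧
      (Bmat m γ).det = ∏ k, ((γ k)⁻¹ - 1) ^ 2 ^ (m - 1) :=
  Bmat_eq_kron_general m γ
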